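/- Let B_0,…,B_d be d+1 orthonormal bases of ℂ^d, with B_a = {e^a_0,…,e^a_{d−1}}, that are pairwise mutually unbiased: |⟨e^a_j, e^b_k⟩|² = 1/d for all a ≠ b and all j, k. Then with uniform weights w_a = 1/(d(d+1)) their union forms a weighted 2-design: ∑_{a,b=0}^{d} w_a w_b ∑_{j,k=0}^{d−1} |⟨e^a_j, e^b_k⟩|^4 = 2/(d(d+1)). -/

import Mathlib

/-!
Each diagonal block `a = b` contributes `∑ⱼₖ |⟨e^a_j, e^a_k⟩|⁴ = d` by orthonormality, and each of
the `(d + 1) d` off-diagonal blocks contributes `d² · (1/d)² = 1` by unbiasedness. The frame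
potential is therefore `(d + 1) d + (d + 1) d = 2 d (d + 1)`, which the weights `(d (d + 1))⁻²`
turn into the Welch bound `2 / (d (d + 1))`.
-/

section FramePotential

variable {𝕜 E : Type*} [RCLike 𝕜] [NormedAddCommGroup E] [InnerProductSpace 𝕜 E]
  {ι κ : Type*} [Fintype ι] [Fintype κ]

theorem sum_sum_norm_inner_pow_four_of_orthonormal {v : ι → E} (hv : Orthonormal 𝕜 v) :
    ∑ j, ∑ k, ‖(inner 𝕜 (v j) (v k) : 𝕜)‖ ^ 4 = Fintype.card ι := by
  classical
  simp [orthonormal_iff_ite.mp hv, apply_ite (fun z : 𝕜 => ‖z‖ ^ 4)]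

theorem sum_sum_norm_inner_pow_four_of_norm_inner_sq_eq {v : ι → E} {w : κ → E} {c : ℝ}
    (h : ∀ j k, ‖(inner 𝕜 (v j) (w k) : 𝕜)‖ ^ 2 = c) :
    ∑ j, ∑ k, ‖(inner 𝕜 (v j) (w k) : 𝕜)‖ ^ 4 = Fintype.card ι * Fintype.card κ * c ^ 2 := by
  have h4 : ∀ j k, ‖(inner 𝕜 (v j) (w k) : 𝕜)‖ ^ 4 = c ^ 2 := fun j k => by
    rw [← h j k]; ring
  simp [h4, mul_assoc]

end FramePotential

theorem Finset.sum_sum_eq_of_diag_of_offDiag {α R : Type*} [Fintype α] [CommRing R]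
    {f : α → α → R} {x y : R}
    (hdiag : ∀ a, f a a = x) (hoff : ∀ a b, a ≠ b → f a b = y) :
    ∑ a, ∑ b, f a b = Fintype.card α * (x + (Fintype.card α - 1) * y) := by
  classical
  have hrow : ∀ a, ∑ b, f a b = x + (Fintype.card α - 1) * y := fun a => by
    rw [← add_sum_erase _ _ (mem_univ a), hdiag,
      sum_congr rfl fun b hb => hoff a b (ne_of_mem_erase hb).symm]
    simp [card_erase_of_mem, Nat.cast_pred (Fintype.card_pos_iff.mpr ⟨a⟩)]
  simp [hrow, mul_add]

theorem mub_complete_set_is_two_design (d : ℕ) (hd : 0 < d)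
    (e : Fin (d + 1) → Fin d → EuclideanSpace ℂ (Fin d)) (he : ∀ a, Orthonormal ℂ (e a))
    (hmub : ∀ a b, a ≠ b → ∀ j k, ‖(inner ℂ (e a j) (e b k) : ℂ)‖ ^ 2 = (d : ℝ)⁻¹) :
    ∑ a : Fin (d + 1), ∑ b : Fin (d + 1),
        ((d : ℝ) * (d + 1))⁻¹ * ((d : ℝ) * (d + 1))⁻¹ *
          ∑ j : Fin d, ∑ k : Fin d, ‖(inner ℂ (e a j) (e b k) : ℂ)‖ ^ 4 =
      2 / (d * (d + 1)) := by
  have hframe := Finset.sum_sum_eq_of_diag_of_offDiag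
    (fun a => sum_sum_norm_inner_pow_four_of_orthonormal (he a))
    (fun a b hab => sum_sum_norm_inner_pow_four_of_norm_inner_sq_eq (hmub a b hab))
  simp only [← Finset.mul_sum, hframe, Fintype.card_fin]
  have hd0 : (d : ℝ) ≠ 0 := by positivity
  field_simp
  push_cast
  ring
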